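/- arXiv:2404.08261 — 2 statements merged into one kernel-verified Lean document; each statement's English description precedes it below -/
import Mathlib

section
/- In the N-client proportional-sharing game with utilities U_i(ρ_i) = R·ρ_i/(Σ_j ρ_j) − φ₁ ν_i ρ_i, suppose N ≥ 2, R > 0, φ₁ > 0, all ν_i > 0, and (N−1)ν_i < Σ_{j=1}^N ν_j for all i. Then the unique interior Nash equilibrium is ρ_i* = R(N−1)/(φ₁ Σ_j ν_j) − (R ν_i/φ₁)·((N−1)/Σ_j ν_j)², and at this equilibrium Σ_{i=1}^N ρ_i* = R(N−1)/(φ₁ Σ_j ν_j). -/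
/-!
Against a fixed total bid `A ≥ 0` of the other clients, client `i` maximises the concave function
`x ↦ R x / (x + A) - c x` on `x > 0`, whose maximiser is characterised by the first-order condition
`R A = c (x + A)²` (under which the loss from deviating to `x'` is `c (x - x')² / (x' + A)`).
An interior profile with total `T` is therefore an equilibrium iff
`R (T - ρ i) = c i T²` for every `i`; summing these conditions pins down `T` (and `T` then pins
down each `ρ i`), and the closed form satisfies them.
-/

open Finset Function

noncomputable def shareUtility (R c A x : ℝ) : ℝ := R * x / (x + A) - c * x

section shareUtility

variable {R c A x x₀ : ℝ}

theorem shareUtility_sub_shareUtility (hx : x + A ≠ 0) (hx₀ : x₀ + A ≠ 0) :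
    shareUtility R c A x₀ - shareUtility R c A x =
      (x₀ - x) * (R * A - c * (x + A) * (x₀ + A)) / ((x + A) * (x₀ + A)) := by
  unfold shareUtility
  field_simp
  ring

theorem shareUtility_le_of_foc (hc : 0 ≤ c) (hA : 0 ≤ A) (hx₀ : 0 < x₀)
    (hfoc : R * A = c * (x₀ + A) ^ 2) (hx : 0 < x) :
    shareUtility R c A x ≤ shareUtility R c A x₀ := by
  have hxA : 0 < x + A := by linarith
  have hx₀A : 0 < x₀ + A := by linarith
  rw [← sub_nonneg, shareUtility_sub_shareUtility hxA.ne' hx₀A.ne']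
  have hnum : (x₀ - x) * (R * A - c * (x + A) * (x₀ + A)) = c * (x₀ + A) * (x₀ - x) ^ 2 := by
    linear_combination (x₀ - x) * hfoc
  rw [hnum]
  positivity

theorem hasDerivAt_shareUtility (hx : x + A ≠ 0) :
    HasDerivAt (shareUtility R c A) (R * A / (x + A) ^ 2 - c) x := by
  have h : HasDerivAt (shareUtility R c A)
      ((R * 1 * (x + A) - R * x * 1) / (x + A) ^ 2 - c * 1) x :=
    (((hasDerivAt_id x).const_mul R).div ((hasDerivAt_id x).add_const A) hx).sub
      ((hasDerivAt_id x).const_mul c)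
  exact h.congr_deriv (by ring)

theorem foc_of_forall_shareUtility_le (hA : 0 ≤ A) (hx₀ : 0 < x₀)
    (hmax : ∀ x, 0 < x → shareUtility R c A x ≤ shareUtility R c A x₀) :
    R * A = c * (x₀ + A) ^ 2 := by
  have hx₀A : x₀ + A ≠ 0 := by positivity
  have hlocal : IsLocalMax (shareUtility R c A) x₀ :=
    IsMaxOn.isLocalMax (fun x hx => hmax x hx) (Ioi_mem_nhds hx₀)
  have hderiv := hlocal.hasDerivAt_eq_zero (hasDerivAt_shareUtility hx₀A)
  field_simp at hderiv
  linarith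

theorem forall_shareUtility_le_iff (hc : 0 ≤ c) (hA : 0 ≤ A) (hx₀ : 0 < x₀) :
    (∀ x, 0 < x → shareUtility R c A x ≤ shareUtility R c A x₀) ↔
      R * A = c * (x₀ + A) ^ 2 :=
  ⟨foc_of_forall_shareUtility_le hA hx₀, fun hfoc _ => shareUtility_le_of_foc hc hA hx₀ hfoc⟩

end shareUtility

section game

variable {ι : Type*} [Fintype ι] {R : ℝ}

theorem utility_update_eq_shareUtility [DecidableEq ι] (ρ : ι → ℝ) (i : ι) (c x : ℝ) :
    R * update ρ i x i / ∑ j, update ρ i x j - c * update ρ i x i =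
      shareUtility R c (∑ j ∈ univ.erase i, ρ j) x := by
  rw [sum_update_of_mem (mem_univ i), sdiff_singleton_eq_erase, update_self, shareUtility,
    add_comm x]

theorem forall_utility_update_le_iff [DecidableEq ι] {c : ℝ} (hc : 0 ≤ c) {ρ : ι → ℝ} (hρ : ∀ j, 0 ≤ ρ j)
    {i : ι} (hi : 0 < ρ i) :
    (∀ x, 0 < x → R * update ρ i x i / ∑ j, update ρ i x j - c * update ρ i x i ≤
        R * ρ i / ∑ j, ρ j - c * ρ i) ↔
      R * (∑ j, ρ j - ρ i) = c * (∑ j, ρ j) ^ 2 := by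
  have hself := utility_update_eq_shareUtility (R := R) ρ i c (ρ i)
  rw [update_eq_self] at hself
  simp only [hself, utility_update_eq_shareUtility]
  rw [forall_shareUtility_le_iff hc (sum_nonneg fun j _ => hρ j) hi,
    sum_erase_eq_sub (mem_univ i), add_sub_cancel]

theorem sum_mul_sum_eq_of_foc {c ρ : ι → ℝ} (hρ : ∑ j, ρ j ≠ 0)
    (hfoc : ∀ i, R * (∑ j, ρ j - ρ i) = c i * (∑ j, ρ j) ^ 2) :
    (∑ i, c i) * ∑ j, ρ j = R * (Fintype.card ι - 1) := by
  have hsum := sum_congr rfl fun i (_ : i ∈ univ) => hfoc i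
  rw [← mul_sum, sum_sub_distrib, sum_const, card_univ, nsmul_eq_mul, ← sum_mul] at hsum
  refine mul_right_cancel₀ hρ ?_
  linear_combination -hsum

theorem eq_of_foc (hR : R ≠ 0) {c ρ ρ' : ι → ℝ} (hc : ∑ i, c i ≠ 0)
    (hρ : ∑ j, ρ j ≠ 0) (hρ' : ∑ j, ρ' j ≠ 0)
    (hfoc : ∀ i, R * (∑ j, ρ j - ρ i) = c i * (∑ j, ρ j) ^ 2)
    (hfoc' : ∀ i, R * (∑ j, ρ' j - ρ' i) = c i * (∑ j, ρ' j) ^ 2) : ρ = ρ' := by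
  have htotal : ∑ j, ρ j = ∑ j, ρ' j := mul_left_cancel₀ hc <| by
    rw [sum_mul_sum_eq_of_foc hρ hfoc, sum_mul_sum_eq_of_foc hρ' hfoc']
  funext i
  refine mul_left_cancel₀ hR ?_
  linear_combination htotal * (R - c i * (∑ j, ρ j + ∑ j, ρ' j)) - hfoc i + hfoc' i

end game

/-- Unique interior Nash equilibrium of the proportional-sharing game. -/
theorem nash_equilibrium (N : ℕ) (hN : 2 ≤ N) (R φ₁ : ℝ)
    (hR : 0 < R) (hφ : 0 < φ₁) (ν : Fin N → ℝ) (hν : ∀ i, 0 < ν i)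
    (hint : ∀ i, ((N : ℝ) - 1) * ν i < ∑ j, ν j) :
    let S : ℝ := ∑ j, ν j
    let ρstar : Fin N → ℝ := fun i =>
      R * ((N : ℝ) - 1) / (φ₁ * S) - (R * ν i / φ₁) * (((N : ℝ) - 1) / S) ^ 2
    let U : (Fin N → ℝ) → Fin N → ℝ := fun ρ i =>
      R * ρ i / (∑ j, ρ j) - φ₁ * ν i * ρ i
    (∀ i, ∀ x : ℝ, 0 < x → U (Function.update ρstar i x) i ≤ U ρstar i) ∧
    (∀ ρ : Fin N → ℝ, (∀ i, 0 < ρ i) →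
      (∀ i, ∀ x : ℝ, 0 < x → U (Function.update ρ i x) i ≤ U ρ i) →
      ρ = ρstar) ∧
    (∑ i, ρstar i = R * ((N : ℝ) - 1) / (φ₁ * S)) := by
  intro S ρstar U
  have hne : (univ : Finset (Fin N)).Nonempty := ⟨⟨0, by omega⟩, mem_univ _⟩
  have hS : 0 < S := sum_pos (fun i _ => hν i) hne
  have hN1 : (0 : ℝ) < N - 1 := by
    rw [sub_pos, Nat.one_lt_cast]
    omega
  have hc : ∀ i, 0 ≤ φ₁ * ν i := fun i => (mul_pos hφ (hν i)).le
  have hsum : ∑ i, ρstar i = R * (N - 1) / (φ₁ * S) := by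
    simp only [ρstar, sum_sub_distrib, sum_const, card_univ, Fintype.card_fin, nsmul_eq_mul,
      ← sum_mul, ← sum_div, ← mul_sum]
    field_simp
    ring
  have hpos : ∀ i, 0 < ρstar i := fun i => by
    have hfactor : ρstar i = R * (N - 1) / (φ₁ * S ^ 2) * (S - (N - 1) * ν i) := by
      simp only [ρstar]
      field_simp
    rw [hfactor]
    exact mul_pos (by positivity) (by linarith [hint i])
  have hfoc : ∀ i, R * (∑ j, ρstar j - ρstar i) = φ₁ * ν i * (∑ j, ρstar j) ^ 2 := fun i => by
    simp only [hsum, ρstar]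
    field_simp
    ring
  refine ⟨fun i => (forall_utility_update_le_iff (hc i) (fun j => (hpos j).le) (hpos i)).2
    (hfoc i), fun ρ hρ hbr => ?_, hsum⟩
  have hfocρ := fun i =>
    (forall_utility_update_le_iff (hc i) (fun j => (hρ j).le) (hρ i)).1 (hbr i)
  exact eq_of_foc hR.ne' (by rw [← mul_sum]; positivity) (sum_pos (fun i _ => hρ i) hne).ne'
    (by rw [hsum]; positivity) hfocρ hfoc
end

section
/- In the two-stage Stackelberg game where the server chooses rewards R_t and clients choose privacy budgets ρ_i^t, the profile (R_t* = √(A_t π^{1−t}/(1−γ)), ρ_i^{t*} = C_i R_t*) is a Stackelberg Nash Equilibrium: for every t and i, ρ_i^{t*} maximizes U_i^t(·, ρ_{-i}^{t*}, R_t*) over ρ_i^t > 0, and (R_1*,...,R_T*) minimizes U_T(·, ρ*) over all positive reward vectors. -/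
/-!
A client's payoff `R y / (y + B) - k y`, where `B` is the others' total budget, equals a constant
minus `R B / u + k u` with `u = y + B`; after substituting `ρ = C R`, the server's cost is a
constant plus `∑ t, (A / R t + (1 - γ) π ^ t R t)`. Both are settled by AM-GM: `a / u + c u` is
minimal at `u² = a / c`. For the clients this is `R B = k (∑ ρ)²`, which the budget coefficients
satisfy identically (`∑ C - C i = φ₁ ν i (∑ C)²`); for the server it is `R t ^ 2 = A / ((1 - γ) π ^ t)`.
-/

open Finset

theorem div_add_mul_le_div_add_mul {a c s r : ℝ} (hc : 0 ≤ c) (hs : 0 ≤ s) (hr : 0 < r)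
    (ha : a = c * s ^ 2) : a / s + c * s ≤ a / r + c * r := by
  have hleft : a / s + c * s = 2 * c * s := by
    rcases hs.eq_or_lt with rfl | hs
    · simp [ha]
    · rw [ha]; field_simp; ring
  have hright : a / r + c * r - 2 * c * s = c * (s - r) ^ 2 / r := by
    rw [ha]; field_simp; ring
  have : 0 ≤ c * (s - r) ^ 2 / r := by positivity
  linarith

theorem tullock_payoff_update_le {ι : Type*} [Fintype ι] [DecidableEq ι] {ρ : ι → ℝ} {i : ι}
    {R k x : ℝ} (hk : 0 ≤ k) (hS : 0 < ∑ j, ρ j) (hx : 0 < x + (∑ j, ρ j - ρ i))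
    (hρ : R * (∑ j, ρ j - ρ i) = k * (∑ j, ρ j) ^ 2) :
    R * x / ∑ j, Function.update ρ i x j - k * x ≤ R * ρ i / ∑ j, ρ j - k * ρ i := by
  have hsum : ∑ j, Function.update ρ i x j = x + (∑ j, ρ j - ρ i) := by
    rw [sum_update_of_mem (mem_univ i), sum_eq_sum_sdiff_singleton_add (mem_univ i) ρ,
      add_sub_cancel_right]
  set S := ∑ j, ρ j
  set B := S - ρ i
  have payoff_eq : ∀ y, y + B ≠ 0 →
      R * y / (y + B) - k * y = R + k * B - (R * B / (y + B) + k * (y + B)) := by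
    intro y hy
    field_simp
    ring
  have hρi : ρ i + B = S := by ring
  rw [hsum, payoff_eq x hx.ne', ← hρi, payoff_eq (ρ i) (hρi ▸ hS.ne'), hρi]
  linarith [div_add_mul_le_div_add_mul hk hS.le hx hρ]

section BudgetCoeff

variable {ι : Type*} [Fintype ι]

noncomputable def nashBudgetCoeff (φ : ℝ) (ν : ι → ℝ) (i : ι) : ℝ :=
  ((Fintype.card ι : ℝ) - 1) * ((∑ j, ν j) - ν i * ((Fintype.card ι : ℝ) - 1)) /
    (φ * (∑ j, ν j) ^ 2)

variable {φ : ℝ} {ν : ι → ℝ}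

theorem sum_nashBudgetCoeff (hφ : φ ≠ 0) (hν : ∑ j, ν j ≠ 0) :
    ∑ i, nashBudgetCoeff φ ν i = ((Fintype.card ι : ℝ) - 1) / (φ * ∑ j, ν j) := by
  simp only [nashBudgetCoeff, ← sum_div, ← mul_sum, sum_sub_distrib, ← sum_mul, sum_const,
    card_univ, nsmul_eq_mul]
  field_simp
  ring

theorem nashBudgetCoeff_pos (hι : 1 < Fintype.card ι) (hφ : 0 < φ) (hν : 0 < ∑ j, ν j) {i : ι}
    (hi : ((Fintype.card ι : ℝ) - 1) * ν i < ∑ j, ν j) : 0 < nashBudgetCoeff φ ν i := by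
  have hι' : (1 : ℝ) < Fintype.card ι := by exact_mod_cast hι
  unfold nashBudgetCoeff
  exact div_pos (mul_pos (by linarith) (by linarith)) (by positivity)

theorem sum_sub_nashBudgetCoeff (hφ : φ ≠ 0) (hν : ∑ j, ν j ≠ 0) (i : ι) :
    ∑ j, nashBudgetCoeff φ ν j - nashBudgetCoeff φ ν i =
      φ * ν i * (∑ j, nashBudgetCoeff φ ν j) ^ 2 := by
  rw [sum_nashBudgetCoeff hφ hν, nashBudgetCoeff]
  field_simp
  ring

theorem isBestResponse_of_eq_nashBudgetCoeff_mul [DecidableEq ι] (hι : 1 < Fintype.card ι)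
    (hφ : 0 < φ) (hν : ∀ j, 0 ≤ ν j) (hνsum : 0 < ∑ j, ν j) {R x : ℝ} (hR : 0 < R) (hx : 0 < x)
    {ρ : ι → ℝ} (hρ : ∀ j, ρ j = nashBudgetCoeff φ ν j * R) (i : ι) :
    R * x / ∑ j, Function.update ρ i x j - φ * ν i * x ≤ R * ρ i / ∑ j, ρ j - φ * ν i * ρ i := by
  have hsum : ∑ j, ρ j = (∑ j, nashBudgetCoeff φ ν j) * R := by
    rw [sum_mul]; exact sum_congr rfl fun j _ => hρ j
  have hothers : ∑ j, ρ j - ρ i = φ * ν i * (∑ j, ρ j) ^ 2 / R := by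
    rw [eq_div_iff hR.ne', hsum, hρ i]
    linear_combination R ^ 2 * sum_sub_nashBudgetCoeff hφ.ne' hνsum.ne' i
  have hsum_pos : 0 < ∑ j, ρ j := by
    have hι' : (1 : ℝ) < Fintype.card ι := by exact_mod_cast hι
    rw [hsum, sum_nashBudgetCoeff hφ.ne' hνsum.ne']
    exact mul_pos (div_pos (by linarith) (mul_pos hφ hνsum)) hR
  have hk : 0 ≤ φ * ν i := mul_nonneg hφ.le (hν i)
  refine tullock_payoff_update_le hk hsum_pos ?_ ?_
  · rw [hothers]
    exact add_pos_of_pos_of_nonneg hx (div_nonneg (mul_nonneg hk (sq_nonneg _)) hR.le)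
  · rw [hothers]; field_simp

end BudgetCoeff

theorem stackelberg_nash_equilibrium_general (N T : ℕ) (hN : 2 ≤ N) (hT : 1 ≤ T)
    (β γ lam d C V π φ₁ : ℝ)
    (hβ : 0 < β) (hγ : 0 < γ) (hγ1 : γ < 1) (hlam : 0 < lam) (hd : 0 < d)
    (hC : 0 < C) (hπ : 0 < π) (hφ : 0 < φ₁)
    (D : Fin N → ℝ) (hD : ∀ i, 0 < D i)
    (ν : Fin N → ℝ) (hν : ∀ i, 0 < ν i)
    (hint : ∀ i, ((N : ℝ) - 1) * ν i < ∑ j, ν j)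
    (Cc : Fin N → ℝ)
    (hCc : ∀ i, Cc i = ((N : ℝ) - 1) * ((∑ j, ν j) - ν i * ((N : ℝ) - 1)) /
      (φ₁ * (∑ j, ν j) ^ 2))
    (A : ℝ)
    (hA : A = ∑ i : Fin N,
      4 * d * γ * β * C ^ 2 / ((T : ℝ) ^ 2 * lam ^ 2 * (N : ℝ) ^ 2 * Cc i * (D i) ^ 2))
    (Rstar : Fin T → ℝ)
    (hRstar : ∀ t : Fin T, Rstar t = Real.sqrt (A / ((1 - γ) * π ^ (t : ℕ))))
    (ρstar : Fin T → Fin N → ℝ)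
    (hρstar : ∀ t i, ρstar t i = Cc i * Rstar t)
    (Ui : ℝ → (Fin N → ℝ) → Fin N → ℝ)
    (hUi : ∀ R ρ i, Ui R ρ i = R * ρ i / (∑ j, ρ j) - φ₁ * ν i * ρ i)
    (UT : (Fin T → ℝ) → (Fin T → Fin N → ℝ) → ℝ)
    (hUT : ∀ R ρ, UT R ρ =
      (2 * β * γ) / (lam ^ 2 * (T : ℝ) ^ 2) *
        ∑ t : Fin T, (V ^ 2 + (2 * d * C ^ 2 / (N : ℝ) ^ 2) *
          ∑ i : Fin N, 1 / ((D i) ^ 2 * ρ t i)) +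
      (1 - γ) * ∑ t : Fin T, π ^ (t : ℕ) * R t) :
    (∀ t : Fin T, ∀ i : Fin N, ∀ x : ℝ, 0 < x →
      Ui (Rstar t) (Function.update (ρstar t) i x) i
        ≤ Ui (Rstar t) (ρstar t) i) ∧
    (∀ R : Fin T → ℝ, (∀ t, 0 < R t) →
      UT Rstar ρstar ≤ UT R (fun t i => Cc i * R t)) := by
  have hN' : 1 < Fintype.card (Fin N) := by rw [Fintype.card_fin]; omega
  have : Nonempty (Fin N) := ⟨⟨0, by omega⟩⟩
  have hνsum : 0 < ∑ j, ν j := sum_pos (fun j _ => hν j) univ_nonempty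
  have hCc_eq : ∀ i, Cc i = nashBudgetCoeff φ₁ ν i := fun i => by
    rw [hCc, nashBudgetCoeff, Fintype.card_fin]
  have hA_pos : 0 < A := by
    have hT' : (0 : ℝ) < T := by exact_mod_cast hT
    rw [hA]
    refine sum_pos (fun i _ => div_pos (by positivity) ?_) univ_nonempty
    have hCc_pos := hCc_eq i ▸ nashBudgetCoeff_pos hN' hφ hνsum (by simpa using hint i)
    exact mul_pos (mul_pos (by positivity) hCc_pos) (pow_pos (hD i) 2)
  have hdisc_pos : ∀ t : ℕ, 0 < (1 - γ) * π ^ t := fun t => mul_pos (by linarith) (pow_pos hπ t)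
  have hRstar_pos : ∀ t, 0 < Rstar t := fun t => by
    rw [hRstar]; exact Real.sqrt_pos.mpr (div_pos hA_pos (hdisc_pos t))
  refine ⟨fun t i x hx => ?_, fun R hR => ?_⟩
  · rw [hUi, hUi, Function.update_self]
    exact isBestResponse_of_eq_nashBudgetCoeff_mul hN' hφ (fun j => (hν j).le) hνsum
      (hRstar_pos t) hx (fun j => hCc_eq j ▸ hρstar t j) i
  · have hcost : ∀ Q : Fin T → ℝ, UT Q (fun t i => Cc i * Q t) =
        ∑ t, ((2 * β * γ) / (lam ^ 2 * (T : ℝ) ^ 2) * V ^ 2 +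
          (A / Q t + (1 - γ) * π ^ (t : ℕ) * Q t)) := fun Q => by
      rw [hUT, mul_sum, mul_sum, ← sum_add_distrib]
      refine sum_congr rfl fun t _ => ?_
      rw [hA, sum_div, mul_add, mul_sum, mul_sum, add_assoc]
      congr 2
      · exact sum_congr rfl fun i _ => by ring
      · ring
    have hρstar_eq : ρstar = fun t i => Cc i * Rstar t := funext fun t => funext (hρstar t)
    rw [hρstar_eq, hcost, hcost]
    refine sum_le_sum fun t _ => (add_le_add_iff_left _).mpr ?_
    refine div_add_mul_le_div_add_mul (hdisc_pos t).le (hRstar_pos t).le (hR t) ?_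
    rw [hRstar, Real.sq_sqrt (div_pos hA_pos (hdisc_pos t)).le, mul_div_cancel₀ _ (hdisc_pos t).ne']

/-- The profile `(R_t*, ρ_i^{t*} = C_i R_t*)` is a Stackelberg Nash
Equilibrium: each client's budget is a best response to the optimal reward,
and the optimal reward vector minimizes the server's cost. -/
theorem stackelberg_nash_equilibrium (N T : ℕ) (hN : 2 ≤ N) (hT : 1 ≤ T)
    (β γ lam d C V π φ₁ : ℝ)
    (hβ : 0 < β) (hγ : 0 < γ) (hγ1 : γ < 1) (hlam : 0 < lam) (hd : 0 < d)
    (hC : 0 < C) (hV : 0 < V) (hπ : 0 < π) (hπ1 : π < 1) (hφ : 0 < φ₁)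
    (D : Fin N → ℝ) (hD : ∀ i, 0 < D i)
    (ν : Fin N → ℝ) (hν : ∀ i, 0 < ν i)
    (hint : ∀ i, ((N : ℝ) - 1) * ν i < ∑ j, ν j)
    (Cc : Fin N → ℝ)
    (hCc : ∀ i, Cc i = ((N : ℝ) - 1) * ((∑ j, ν j) - ν i * ((N : ℝ) - 1)) /
      (φ₁ * (∑ j, ν j) ^ 2))
    (A : ℝ)
    (hA : A = ∑ i : Fin N,
      4 * d * γ * β * C ^ 2 / ((T : ℝ) ^ 2 * lam ^ 2 * (N : ℝ) ^ 2 * Cc i * (D i) ^ 2))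
    (Rstar : Fin T → ℝ)
    (hRstar : ∀ t : Fin T, Rstar t = Real.sqrt (A / ((1 - γ) * π ^ (t : ℕ))))
    (ρstar : Fin T → Fin N → ℝ)
    (hρstar : ∀ t i, ρstar t i = Cc i * Rstar t)
    (Ui : ℝ → (Fin N → ℝ) → Fin N → ℝ)
    (hUi : ∀ R ρ i, Ui R ρ i = R * ρ i / (∑ j, ρ j) - φ₁ * ν i * ρ i)
    (UT : (Fin T → ℝ) → (Fin T → Fin N → ℝ) → ℝ)
    (hUT : ∀ R ρ, UT R ρ =
      (2 * β * γ) / (lam ^ 2 * (T : ℝ) ^ 2) *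
        ∑ t : Fin T, (V ^ 2 + (2 * d * C ^ 2 / (N : ℝ) ^ 2) *
          ∑ i : Fin N, 1 / ((D i) ^ 2 * ρ t i)) +
      (1 - γ) * ∑ t : Fin T, π ^ (t : ℕ) * R t) :
    (∀ t : Fin T, ∀ i : Fin N, ∀ x : ℝ, 0 < x →
      Ui (Rstar t) (Function.update (ρstar t) i x) i
        ≤ Ui (Rstar t) (ρstar t) i) ∧
    (∀ R : Fin T → ℝ, (∀ t, 0 < R t) →
      UT Rstar ρstar ≤ UT R (fun t i => Cc i * R t)) :=
  stackelberg_nash_equilibrium_general N T hN hT β γ lam d C V π φ₁ hβ hγ hγ1 hlam hd hC hπ hφ D hD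
    ν hν hint Cc hCc A hA Rstar hRstar ρstar hρstar Ui hUi UT hUT
end
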